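/- arXiv:2008.08219 — 4 statements merged into one kernel-verified Lean document; each statement's English description precedes it below -/
import Mathlib

section
/- Let Y be an integrable random vector in ℝ^D. Then E[Y] lies in the relative interior of the convex hull of the support of the distribution of Y. -/
open MeasureTheory Set

/-! The support of `ν` is conull, so the mean `m` lies in the (closed) affine span of
`C = convexHull ℝ ν.support`. If `m` were on the relative boundary of `C`, a supporting
hyperplane through `m` would give a functional `F` with `F ≤ F m` on `C` that is not constant
on `C`. But `F x ≤ F m` for `ν`-a.e. `x` together with `∫ F dν = F m` forces `F = F m` a.e.,
hence on the closed support and then on all of `C`. -/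

/-- The (topological) support of a measure `ν` on `ℝ^D`: the set of points all of whose
neighborhoods have positive measure.  This is the smallest closed set of full measure. -/
def measureSupport {E : Type*} [TopologicalSpace E] [MeasurableSpace E] (ν : Measure E) : Set E :=
  {x | ∀ U ∈ nhds x, 0 < ν U}

theorem measureSupport_eq_support {E : Type*} [TopologicalSpace E] [MeasurableSpace E]
    (ν : Measure E) : measureSupport ν = ν.support :=
  ext fun x => (Measure.mem_support_iff_forall x).symm

theorem Convex.exists_forall_le_of_notMem_interior {E : Type*} [TopologicalSpace E]
    [AddCommGroup E] [IsTopologicalAddGroup E] [Module ℝ E] [ContinuousSMul ℝ E]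
    {C : Set E} (hC : Convex ℝ C) (hCint : (interior C).Nonempty) {b : E}
    (hb : b ∉ interior C) :
    ∃ f : StrongDual ℝ E, (∀ x ∈ C, f x ≤ f b) ∧ ∃ x ∈ C, f x < f b := by
  obtain ⟨f, hf⟩ := geometric_hahn_banach_open_point hC.interior isOpen_interior hb
  obtain ⟨z, hz⟩ := hCint
  refine ⟨f, fun x hx => ?_, z, interior_subset hz, hf z hz⟩
  have hx_cl : x ∈ closure (interior C) := by
    rw [hC.closure_interior_eq_closure_of_nonempty_interior ⟨z, hz⟩]
    exact subset_closure hx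
  exact closure_minimal (fun y hy => (hf y hy).le) (isClosed_Iic.preimage f.continuous) hx_cl

section VaddConstAffineSpan

variable {E : Type*} [NormedAddCommGroup E] [NormedSpace ℝ E] {C : Set E} {c : E}

noncomputable def vaddConstAffineSpan (hc : c ∈ C) :
    (affineSpan ℝ C).direction →ᵃⁱ[ℝ] E :=
  haveI : Nonempty (affineSpan ℝ C) := ⟨⟨c, subset_affineSpan ℝ C hc⟩⟩
  (affineSpan ℝ C).subtypeₐᵢ.comp
    (AffineIsometryEquiv.vaddConst ℝ ⟨c, subset_affineSpan ℝ C hc⟩).toAffineIsometry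

theorem vaddConstAffineSpan_apply (hc : c ∈ C) (v : (affineSpan ℝ C).direction) :
    vaddConstAffineSpan hc v = v + c := rfl

theorem range_vaddConstAffineSpan (hc : c ∈ C) :
    range (vaddConstAffineSpan hc) = affineSpan ℝ C := by
  ext x
  constructor
  · rintro ⟨v, rfl⟩
    exact AffineSubspace.vadd_mem_of_mem_direction v.2 (subset_affineSpan ℝ C hc)
  · intro hx
    exact ⟨⟨x - c, AffineSubspace.vsub_mem_direction hx (subset_affineSpan ℝ C hc)⟩,
      sub_add_cancel x c⟩

theorem affineSpan_preimage_vaddConstAffineSpan (hc : c ∈ C) :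
    affineSpan ℝ (vaddConstAffineSpan hc ⁻¹' C) = ⊤ := by
  have : Nonempty C := ⟨⟨c, hc⟩⟩
  rw [show vaddConstAffineSpan hc ⁻¹' C = (AffineIsometryEquiv.vaddConst ℝ
      (⟨c, subset_affineSpan ℝ C hc⟩ : affineSpan ℝ C)).toAffineEquiv ⁻¹'
      ((↑) ⁻¹' C : Set (affineSpan ℝ C)) from rfl,
    ← AffineSubspace.comap_span, affineSpan_coe_preimage_eq_top, AffineSubspace.comap_top]

end VaddConstAffineSpan

theorem Convex.exists_forall_le_of_notMem_intrinsicInterior {E : Type*} [NormedAddCommGroup E]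
    [NormedSpace ℝ E] [FiniteDimensional ℝ E] {C : Set E} (hC : Convex ℝ C) {c b : E}
    (hc : c ∈ C) (hbC : b ∈ affineSpan ℝ C) (hb : b ∉ intrinsicInterior ℝ C) :
    ∃ F : StrongDual ℝ E, (∀ x ∈ C, F x ≤ F b) ∧ ∃ x ∈ C, F x < F b := by
  -- Pulled back to the direction of its affine span, `C` has nonempty interior: separate there,
  -- then extend the functional to `E`.
  set ψ := vaddConstAffineSpan hc
  have hCψ : C ⊆ range ψ := range_vaddConstAffineSpan hc ▸ subset_affineSpan ℝ C
  obtain ⟨w, rfl⟩ : b ∈ range ψ := range_vaddConstAffineSpan hc ▸ hbC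
  have hT : Convex ℝ (ψ ⁻¹' C) := hC.affine_preimage ψ.toAffineMap
  have hT_int : (interior (ψ ⁻¹' C)).Nonempty :=
    hT.interior_nonempty_iff_affineSpan_eq_top.2 (affineSpan_preimage_vaddConstAffineSpan hc)
  have hw : w ∉ interior (ψ ⁻¹' C) := fun hw => hb <| by
    have hψ := ψ.intrinsicInterior_image (ψ ⁻¹' C)
    rw [image_preimage_eq_of_subset hCψ] at hψ
    rw [hψ]
    exact mem_image_of_mem ψ (interior_subset_intrinsicInterior hw)
  obtain ⟨f, hle, v, hv, hlt⟩ := hT.exists_forall_le_of_notMem_interior hT_int hw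
  obtain ⟨g, hg⟩ := LinearMap.exists_extend (f : (affineSpan ℝ C).direction →ₗ[ℝ] ℝ)
  set F : StrongDual ℝ E := LinearMap.toContinuousLinearMap g
  have hFψ : ∀ u, F (ψ u) = f u + F c := fun u => by
    rw [vaddConstAffineSpan_apply, map_add]
    exact congrArg (· + F c) (LinearMap.congr_fun hg u)
  refine ⟨F, fun x hx => ?_, ψ v, hv, by simpa only [hFψ, add_lt_add_iff_right] using hlt⟩
  obtain ⟨u, rfl⟩ := hCψ hx
  simpa only [hFψ, add_le_add_iff_right] using hle u hx

namespace MeasureTheory.Measure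

variable {E : Type*} [NormedAddCommGroup E] [NormedSpace ℝ E] [MeasurableSpace E]
  {ν : Measure E} [IsProbabilityMeasure ν]

theorem forall_eq_integral_of_forall_le_integral [CompleteSpace E] [HereditarilyLindelofSpace E]
    (hν : Integrable id ν) (F : StrongDual ℝ E)
    (hF : ∀ x ∈ ν.support, F x ≤ F (∫ x, x ∂ν)) :
    ∀ x ∈ ν.support, F x = F (∫ x, x ∂ν) := by
  have hle : (fun x => F x) ≤ᵐ[ν] fun _ => F (∫ x, x ∂ν) := by
    filter_upwards [support_mem_ae] using hF
  have hint : ∫ x, F x ∂ν = ∫ _, F (∫ x, x ∂ν) ∂ν := by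
    rw [integral_const, probReal_univ, one_smul]
    exact F.integral_comp_comm hν
  exact support_subset_of_isClosed (isClosed_eq F.continuous continuous_const)
    ((integral_eq_iff_of_ae_le (F.integrable_comp hν) (integrable_const _) hle).1 hint)

theorem integral_id_mem_intrinsicInterior_convexHull_support [FiniteDimensional ℝ E]
    [BorelSpace E] (hν : Integrable id ν) :
    ∫ x, x ∂ν ∈ intrinsicInterior ℝ (convexHull ℝ ν.support) := by
  have hS : ν.support ⊆ affineSpan ℝ (convexHull ℝ ν.support) :=
    (subset_convexHull ℝ _).trans (subset_affineSpan ℝ _)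
  have hmean : ∫ x, x ∂ν ∈ affineSpan ℝ (convexHull ℝ ν.support) :=
    (affineSpan ℝ _).convex.integral_mem (affineSpan ℝ _).closed_of_finiteDimensional
      (by filter_upwards [support_mem_ae] using hS) hν
  obtain ⟨c, hc⟩ := nonempty_support (IsProbabilityMeasure.ne_zero ν)
  by_contra hmean_int
  obtain ⟨F, hle, x, hx, hlt⟩ :=
    (convex_convexHull ℝ ν.support).exists_forall_le_of_notMem_intrinsicInterior
      (subset_convexHull ℝ _ hc) hmean hmean_int
  have hsupp := forall_eq_integral_of_forall_le_integral hν F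
    fun y hy => hle y (subset_convexHull ℝ _ hy)
  exact hlt.ne (convexHull_min hsupp (convex_hyperplane F.isLinear _) hx)

end MeasureTheory.Measure

/-- The expectation of an integrable random vector `Y` in `ℝ^D` lies in the relative
interior of the convex hull of the support of the distribution of `Y`. -/
theorem mean_mem_relativeInterior_convexHull_support
    {Ω : Type*} [MeasurableSpace Ω] (μ : Measure Ω) [IsProbabilityMeasure μ]
    (D : ℕ) (Y : Ω → (Fin D → ℝ)) (hY : Measurable Y) (hint : Integrable Y μ) :
    (∫ ω, Y ω ∂μ) ∈ intrinsicInterior ℝ (convexHull ℝ (measureSupport (μ.map Y))) := by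
  have : IsProbabilityMeasure (μ.map Y) :=
    Measure.isProbabilityMeasure_map hY.aemeasurable
  have hmean : ∫ ω, Y ω ∂μ = ∫ x, x ∂(μ.map Y) :=
    (integral_map hY.aemeasurable aestronglyMeasurable_id).symm
  rw [measureSupport_eq_support, hmean]
  exact Measure.integral_id_mem_intrinsicInterior_convexHull_support
    ((integrable_map_measure aestronglyMeasurable_id hY.aemeasurable).2 hint)
end

section
/- Let X, X₁, X₂, … be i.i.d. random variables on a measurable space Ω and φ : Ω → ℝ^D measurable with E[‖φ(X)‖] < ∞ and φ₁ ≡ 1. Then almost surely there exists a positive integer n such that E[φ(X)] ∈ conv{φ(X₁), …, φ(X_n)}. -/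
/-!
Let `m = E[φ(X)]` and let `N` be the space of functionals `f` with `f ∘ φ = f m` almost surely;
almost surely every sample satisfies these constraints, since `N` is finitely generated.
A functional `f ∉ N` has `μ {f ∘ φ < f m} > 0`, for otherwise `f ∘ φ ≥ f m` a.s. with equal
means. That strict inequality persists, on a set of positive mass, for all functionals near `f`,
so compactness of the unit sphere of a complement of `N` and the second Borel–Cantelli lemma give,
almost surely, finitely many samples such that every functional `f` has `f (φ Xₖ) ≤ f m` for one
of them. By Hahn–Banach, `m` lies in their convex hull.
-/

open MeasureTheory Filter Topology

theorem mem_convexHull_of_forall_exists_le {E : Type*} [AddCommGroup E] [Module ℝ E]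
    [TopologicalSpace E] [IsTopologicalAddGroup E] [ContinuousSMul ℝ E]
    [LocallyConvexSpace ℝ E] [T2Space E] {s : Set E} (hs : s.Finite) {x : E}
    (h : ∀ f : StrongDual ℝ E, ∃ y ∈ s, f y ≤ f x) : x ∈ convexHull ℝ s := by
  by_contra hx
  obtain ⟨f, u, hfx, hf⟩ :=
    geometric_hahn_banach_point_closed (convex_convexHull ℝ s) (hs.isClosed_convexHull ℝ) hx
  obtain ⟨y, hy, hyx⟩ := h f
  linarith [hf y (subset_convexHull ℝ s hy)]

theorem IsCompact.exists_subset_biUnion_lt {X : Type*} [TopologicalSpace X] {K : Set X}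
    (hK : IsCompact K) (U : ℕ → Set X) (hU : ∀ k, IsOpen (U k)) (hKU : K ⊆ ⋃ k, U k) :
    ∃ n, K ⊆ ⋃ k < n, U k := by
  refine hK.elim_directed_cover _ (fun n => isOpen_biUnion fun k _ => hU k) ?_
    (Monotone.directed_le fun m n hmn => Set.biUnion_subset_biUnion_left fun k hk => ?_)
  · intro x hx
    obtain ⟨k, hk⟩ := Set.mem_iUnion.1 (hKU hx)
    exact Set.mem_iUnion.2 ⟨k + 1, Set.mem_biUnion (Nat.lt_succ_self k) hk⟩
  · exact lt_of_lt_of_le hk hmn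

namespace ProbabilityTheory

theorem iIndepFun.ae_exists_mem {Ω' Ω : Type*} [MeasurableSpace Ω'] [MeasurableSpace Ω]
    {P : Measure Ω'} {μ : Measure Ω} {X : ℕ → Ω' → Ω} (hindep : iIndepFun X P)
    (hXm : ∀ k, Measurable (X k)) (hlaw : ∀ k, P.map (X k) = μ)
    {A : Set Ω} (hA : MeasurableSet A) (hμA : μ A ≠ 0) :
    ∀ᵐ ω' ∂P, ∃ k, X k ω' ∈ A := by
  have : IsProbabilityMeasure P := hindep.isProbabilityMeasure
  have hpre : ∀ k, P (X k ⁻¹' A) = μ A := fun k => by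
    rw [← hlaw k, Measure.map_apply (hXm k) hA]
  have hindepSet : iIndepSet (fun k => X k ⁻¹' A) P :=
    (iIndepSet_iff_meas_biInter fun k => hXm k hA).2 fun s =>
      hindep.measure_inter_preimage_eq_mul s (sets := fun _ => A) fun _ _ => hA
  have hlimsup : P (limsup (fun k => X k ⁻¹' A) atTop) = 1 :=
    measure_limsup_eq_one (fun k => hXm k hA) hindepSet
      (by simpa [hpre] using ENNReal.tsum_const_eq_top_of_ne_zero (α := ℕ) hμA)
  have hae : ∀ᵐ ω' ∂P, ω' ∈ (limsup (fun k => X k ⁻¹' A) atTop : Set Ω') :=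
    (mem_ae_iff_prob_eq_one (MeasurableSet.measurableSet_limsup fun k => hXm k hA)).2 hlimsup
  filter_upwards [hae] with ω' hω'
  exact (mem_limsup_iff_frequently_mem.1 hω').exists

end ProbabilityTheory

section

variable {Ω E : Type*} [MeasurableSpace Ω] [NormedAddCommGroup E] [NormedSpace ℝ E]

def aeConstFunctionals (μ : Measure Ω) (φ : Ω → E) (x : E) :
    Submodule ℝ (StrongDual ℝ E) where
  carrier := {f | ∀ᵐ ω ∂μ, f (φ ω) = f x}
  add_mem' {f g} hf hg := by
    simp only [Set.mem_ofPred_eq] at *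
    filter_upwards [hf, hg] with ω hfω hgω
    simp [hfω, hgω]
  zero_mem' := by simp
  smul_mem' c f hf := by
    simp only [Set.mem_ofPred_eq] at *
    filter_upwards [hf] with ω hfω
    simp [hfω]

theorem ae_forall_mem_aeConstFunctionals [FiniteDimensional ℝ E] (μ : Measure Ω) (φ : Ω → E)
    (x : E) : ∀ᵐ ω ∂μ, ∀ f ∈ aeConstFunctionals μ φ x, f (φ ω) = f x := by
  obtain ⟨T, hT⟩ := IsNoetherian.noetherian (aeConstFunctionals μ φ x)
  have hgen : ∀ᵐ ω ∂μ, ∀ f ∈ T, f (φ ω) = f x :=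
    (eventually_all_finset T).2 fun f hf => (hT ▸ Submodule.subset_span hf : f ∈ _)
  filter_upwards [hgen] with ω hω
  have hspan : Submodule.span ℝ (T : Set (StrongDual ℝ E)) ≤
      LinearMap.ker (ContinuousLinearMap.apply ℝ ℝ (φ ω - x) : StrongDual ℝ E →ₗ[ℝ] ℝ) :=
    Submodule.span_le.2 fun f hf => by simp [hω f hf]
  intro f hf
  simpa [sub_eq_zero] using hspan (hT ▸ hf)

theorem mem_aeConstFunctionals_of_measure_lt_eq_zero [CompleteSpace E] {μ : Measure Ω}
    [IsProbabilityMeasure μ] {φ : Ω → E} (hφ : Integrable φ μ) {f : StrongDual ℝ E}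
    (hf : μ {ω | f (φ ω) < f (∫ ω, φ ω ∂μ)} = 0) :
    f ∈ aeConstFunctionals μ φ (∫ ω, φ ω ∂μ) := by
  have hle : (fun _ => f (∫ ω, φ ω ∂μ)) ≤ᵐ[μ] fun ω => f (φ ω) := by
    rw [EventuallyLE, ae_iff]
    simpa only [not_le] using hf
  have hint : ∫ _, f (∫ ω, φ ω ∂μ) ∂μ = ∫ ω, f (φ ω) ∂μ := by
    rw [integral_const, f.integral_comp_comm hφ]
    simp
  exact ((integral_eq_iff_of_ae_le (integrable_const _) (f.integrable_comp hφ) hle).1 hint).symm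

theorem exists_lt_apply_le_of_isCompl {N C : Submodule ℝ (StrongDual ℝ E)} (hNC : IsCompl N C)
    {y : ℕ → E} {x : E} {n : ℕ} (hN : ∀ k, ∀ g ∈ N, g (y k) = g x)
    (hC : ∀ h ∈ Metric.sphere 0 1 ∩ (C : Set (StrongDual ℝ E)), ∃ k < n, h (y k) < h x)
    (f : StrongDual ℝ E) : ∃ k < n + 1, f (y k) ≤ f x := by
  obtain ⟨g, hg, h, hh, rfl⟩ := Submodule.mem_sup.1 
    (hNC.sup_eq_top ▸ Submodule.mem_top : f ∈ N ⊔ C)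
  by_cases h0 : h = 0
  · exact ⟨0, n.succ_pos, by simp [h0, hN 0 g hg]⟩
  obtain ⟨k, hk, hlt⟩ := hC (‖h‖⁻¹ • h) ⟨by simp [norm_smul, h0], C.smul_mem _ hh⟩
  have hlt' : h (y k) < h x := by
    simpa using (smul_lt_smul_iff_of_pos_left (inv_pos.2 (norm_pos_iff.2 h0))).1 hlt
  exact ⟨k, hk.trans n.lt_succ_self, by simp only [add_apply, hN k g hg]; linarith⟩

variable [MeasurableSpace E] [BorelSpace E]

theorem exists_mem_nhds_measurableSet_forall_apply_lt {μ : Measure Ω} {φ : Ω → E}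
    (hφ : Measurable φ) {x : E} {f : StrongDual ℝ E} (hf : μ {ω | f (φ ω) < f x} ≠ 0) :
    ∃ U ∈ 𝓝 f, ∃ A, MeasurableSet A ∧ μ A ≠ 0 ∧ ∀ g ∈ U, ∀ ω ∈ A, g (φ ω) < g x := by
  set A : ℕ → Set Ω := fun j => {ω | f (φ ω - x) < -(1 / (j + 1) * ‖φ ω - x‖)}
  have hA : ∀ j, MeasurableSet (A j) := fun j => measurableSet_lt (by fun_prop) (by fun_prop)
  have hcover : {ω | f (φ ω) < f x} ⊆ ⋃ j, A j := by
    intro ω hω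
    have hneg : 0 < -f (φ ω - x) := by simpa [sub_lt_zero] using hω
    have hsmall : Tendsto (fun j : ℕ => 1 / ((j : ℝ) + 1) * ‖φ ω - x‖) atTop (𝓝 0) := by
      simpa using tendsto_one_div_add_atTop_nhds_zero_nat.mul_const ‖φ ω - x‖
    obtain ⟨j, hj⟩ := (hsmall.eventually (gt_mem_nhds hneg)).exists
    exact Set.mem_iUnion.2 ⟨j, lt_neg.1 hj⟩
  obtain ⟨j, hj⟩ : ∃ j, μ (A j) ≠ 0 := by
    by_contra! h
    exact hf (measure_mono_null hcover (measure_iUnion_null h))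
  refine ⟨Metric.ball f (1 / (j + 1)), Metric.ball_mem_nhds f (by positivity), A j, hA j, hj,
    fun g hg ω hω => ?_⟩
  have hdiff : (g - f) (φ ω - x) ≤ 1 / (j + 1) * ‖φ ω - x‖ :=
    (le_abs_self _).trans <| ((g - f).le_opNorm _).trans <|
      mul_le_mul_of_nonneg_right (mem_ball_iff_norm.1 hg).le (norm_nonneg _)
  have hω' : f (φ ω - x) < -(1 / (j + 1) * ‖φ ω - x‖) := hω
  have : g (φ ω - x) < 0 := by
    rw [sub_apply] at hdiff
    linarith
  simpa [sub_lt_zero] using this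

theorem ae_forall_mem_exists_apply_lt {Ω' : Type*} [MeasurableSpace Ω'] {P : Measure Ω'}
    {μ : Measure Ω} {X : ℕ → Ω' → Ω} (hindep : ProbabilityTheory.iIndepFun X P)
    (hXm : ∀ k, Measurable (X k)) (hlaw : ∀ k, P.map (X k) = μ) {φ : Ω → E}
    (hφ : Measurable φ) {x : E} {K : Set (StrongDual ℝ E)} (hK : IsCompact K)
    (hKμ : ∀ f ∈ K, μ {ω | f (φ ω) < f x} ≠ 0) :
    ∀ᵐ ω' ∂P, ∀ f ∈ K, ∃ k, f (φ (X k ω')) < f x := by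
  choose U hU A hA hμA hUA using fun (f : K) =>
    exists_mem_nhds_measurableSet_forall_apply_lt hφ (hKμ f f.2)
  obtain ⟨t, hKt⟩ := hK.elim_nhds_subcover' (fun f hf => U ⟨f, hf⟩) fun f hf => hU ⟨f, hf⟩
  have hhit : ∀ᵐ ω' ∂P, ∀ i ∈ t, ∃ k, X k ω' ∈ A i :=
    (eventually_all_finset t).2 fun i _ => hindep.ae_exists_mem hXm hlaw (hA i) (hμA i)
  filter_upwards [hhit] with ω' hω' f hf
  obtain ⟨i, hit, hfi⟩ := Set.mem_iUnion₂.1 (hKt hf)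
  obtain ⟨k, hk⟩ := hω' i hit
  exact ⟨k, hUA i f hfi _ hk⟩

theorem ae_exists_integral_mem_convexHull [FiniteDimensional ℝ E] {Ω' : Type*}
    [MeasurableSpace Ω'] {P : Measure Ω'} {μ : Measure Ω} [IsProbabilityMeasure μ]
    {X : ℕ → Ω' → Ω} (hindep : ProbabilityTheory.iIndepFun X P) (hXm : ∀ k, Measurable (X k))
    (hlaw : ∀ k, P.map (X k) = μ) {φ : Ω → E} (hφ : Measurable φ) (hint : Integrable φ μ) :
    ∀ᵐ ω' ∂P, ∃ n, 0 < n ∧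
      ∫ ω, φ ω ∂μ ∈ convexHull ℝ {y | ∃ k < n, y = φ (X k ω')} := by
  set m := ∫ ω, φ ω ∂μ
  set N := aeConstFunctionals μ φ m
  obtain ⟨C, hNC⟩ := N.exists_isCompl
  set K := Metric.sphere 0 1 ∩ (C : Set (StrongDual ℝ E))
  have hK : IsCompact K := (isCompact_sphere 0 1).inter_right C.closed_of_finiteDimensional
  have hKμ : ∀ f ∈ K, μ {ω | f (φ ω) < f m} ≠ 0 := by
    rintro f ⟨hf1, hfC⟩ h0
    have hf0 : f = 0 := Submodule.disjoint_def.1 hNC.disjoint f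
      (mem_aeConstFunctionals_of_measure_lt_eq_zero hint h0) hfC
    simp [hf0] at hf1
  have hsamples : ∀ᵐ ω' ∂P, ∀ k, ∀ g ∈ N, g (φ (X k ω')) = g m :=
    ae_all_iff.2 fun k => ae_of_ae_map (hXm k).aemeasurable <| by
      rw [hlaw k]
      exact ae_forall_mem_aeConstFunctionals μ φ m
  filter_upwards [hsamples, ae_forall_mem_exists_apply_lt hindep hXm hlaw hφ hK hKμ]
    with ω' hN hC
  obtain ⟨n, hn⟩ := hK.exists_subset_biUnion_lt (fun k => {f | f (φ (X k ω')) < f m})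
    (fun k => isOpen_lt (ContinuousLinearMap.apply ℝ ℝ _).continuous
      (ContinuousLinearMap.apply ℝ ℝ _).continuous)
    fun f hf => Set.mem_iUnion.2 (hC f hf)
  have hfin : {y | ∃ k < n + 1, y = φ (X k ω')}.Finite :=
    ((Set.finite_lt_nat (n + 1)).image fun k => φ (X k ω')).subset
      fun y ⟨k, hk, hy⟩ => ⟨k, hk, hy.symm⟩
  refine ⟨n + 1, n.succ_pos, mem_convexHull_of_forall_exists_le hfin fun f => ?_⟩
  obtain ⟨k, hk, hle⟩ := exists_lt_apply_le_of_isCompl hNC hN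
    (fun f hf => by simpa using hn hf) f
  exact ⟨_, ⟨k, hk, rfl⟩, hle⟩

end

theorem monte_carlo_cubature_general {Ω' Ω : Type*} [MeasurableSpace Ω'] [MeasurableSpace Ω]
    (P : Measure Ω') (μ : Measure Ω) [IsProbabilityMeasure μ]
    (X : ℕ → Ω' → Ω) (hXm : ∀ k, Measurable (X k))
    (hindep : ProbabilityTheory.iIndepFun (m := fun _ => ‹MeasurableSpace Ω›) X P)
    (hlaw : ∀ k, P.map (X k) = μ)
    (D : ℕ) (φ : Ω → Fin D → ℝ) (hφ : Measurable φ)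
    (hint : Integrable φ μ) :
    ∀ᵐ ω' ∂P, ∃ n : ℕ, 0 < n ∧
      (fun i => ∫ ω, φ ω i ∂μ) ∈
        convexHull ℝ {y : Fin D → ℝ | ∃ k < n, y = φ (X k ω')} := by
  have hmean : (fun i => ∫ ω, φ ω i ∂μ) = ∫ ω, φ ω ∂μ :=
    funext fun i => (eval_integral (Integrable.eval hint) i).symm
  rw [hmean]
  exact ae_exists_integral_mem_convexHull hindep hXm hlaw hφ hint

/-- **Monte Carlo cubature construction.**  If `X, X₁, X₂, …` are i.i.d. samples with
common law `μ` and `φ : Ω → ℝ^D` is integrable with first coordinate `≡ 1`, then almost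
surely some finite initial segment of the samples has `E[φ(X)]` in the convex hull of
its `φ`-images. -/
theorem monte_carlo_cubature {Ω' Ω : Type*} [MeasurableSpace Ω'] [MeasurableSpace Ω]
    (P : Measure Ω') [IsProbabilityMeasure P] (μ : Measure Ω) [IsProbabilityMeasure μ]
    (X : ℕ → Ω' → Ω) (hXm : ∀ k, Measurable (X k))
    (hindep : ProbabilityTheory.iIndepFun (m := fun _ => ‹MeasurableSpace Ω›) X P)
    (hlaw : ∀ k, P.map (X k) = μ)
    (D : ℕ) (hD : 0 < D) (φ : Ω → Fin D → ℝ) (hφ : Measurable φ)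
    (hint : Integrable φ μ) (hone : ∀ ω, φ ω ⟨0, hD⟩ = 1) :
    ∀ᵐ ω' ∂P, ∃ n : ℕ, 0 < n ∧
      (fun i => ∫ ω, φ ω i ∂μ) ∈
        convexHull ℝ {y : Fin D → ℝ | ∃ k < n, y = φ (X k ω')} :=
  monte_carlo_cubature_general P μ X hXm hindep hlaw D φ hφ hint
end

section
/- Let w = (w⁰, w¹) : [0,T] → ℝ² be a continuous path of bounded variation starting at the origin with w⁰ strictly increasing. If the iterated integral ∫_{0<t₁<t₂<t₃<T} dw¹(t₁) dw¹(t₂) dw⁰(t₃) equals 0, then ∫_{0<t₁<t₂<T} dw¹(t₁) dw⁰(t₂) = 0. -/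
open MeasureTheory

/-- Lebesgue–Stieltjes integral of `f` over `(s, t]` against `d(a - b)` for monotone
(Stieltjes) functions `a`, `b`. -/
noncomputable def sInt (a b : StieltjesFunction ℝ) (f : ℝ → ℝ) (s t : ℝ) : ℝ :=
  (∫ r in Set.Ioc s t, f r ∂a.measure) - ∫ r in Set.Ioc s t, f r ∂b.measure

/-- Iterated Lebesgue–Stieltjes integral of the path with coordinates `w^j = a j - b j`
over the ordered simplex `{s < t₁ < ⋯ < t_k < t}`, indexed by the word `(i₁,…,i_k)`. -/
noncomputable def iterInt {d : ℕ} (a b : Fin (d + 1) → StieltjesFunction ℝ) :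
    List (Fin (d + 1)) → ℝ → ℝ → ℝ
  | [], _, _ => 1
  | i :: α, s, t => sInt (a i) (b i) (fun r => iterInt a b α r t) s t

/-!
Fubini on the triangle `{r < u}` swaps the order of an iterated Stieltjes integral against
continuous integrators. This gives `∫_{s<t₁<t₂<t} dwⁱ dwʲ = ∫_{(s,t]} (wⁱ - wⁱ(s)) dwʲ` and,
for `i = j`, the chain rule `∫_{(s,t]} (wⁱ(t) - wⁱ) dwⁱ = (wⁱ(t) - wⁱ(s))² / 2`; together they give
`∫ dw¹ dw¹ dw⁰ = ∫_{(0,T]} (w¹ - w¹(0))² / 2 dw⁰`. As `w⁰` is monotone on `[0, T]`, `dw⁰` is a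
genuine measure there, so the vanishing of this integral forces `w¹ = w¹(0)` `dw⁰`-a.e., whence
`∫ dw¹ dw⁰ = ∫_{(0,T]} (w¹ - w¹(0)) dw⁰ = 0`.
-/

open Set

section TriangleFubini

variable {μ ν : Measure ℝ} {K : ℝ → ℝ → ℝ} {s t : ℝ}

noncomputable def kernelAboveDiagonal (K : ℝ → ℝ → ℝ) : ℝ × ℝ → ℝ :=
  {p : ℝ × ℝ | p.1 < p.2}.indicator fun p => K p.1 p.2

theorem integrable_kernelAboveDiagonal [IsLocallyFiniteMeasure μ] [IsLocallyFiniteMeasure ν]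
    (hK : Continuous fun p : ℝ × ℝ => K p.1 p.2) :
    Integrable (kernelAboveDiagonal K) ((μ.restrict (Ioc s t)).prod (ν.restrict (Ioc s t))) := by
  rw [Measure.prod_restrict]
  refine Integrable.indicator (f := fun p : ℝ × ℝ => K p.1 p.2) ?_
    (measurableSet_lt measurable_fst measurable_snd)
  exact (hK.continuousOn.integrableOn_compact (isCompact_Icc.prod isCompact_Icc)).mono_set
    (prod_mono Ioc_subset_Icc_self Ioc_subset_Icc_self)

theorem integral_kernelAboveDiagonal_left {r : ℝ} (hr : r ∈ Ioc s t) :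
    ∫ u, kernelAboveDiagonal K (r, u) ∂ν.restrict (Ioc s t) = ∫ u in Ioc r t, K r u ∂ν := by
  have hslice : Ioi r ∩ Ioc s t = Ioc r t := by
    ext u
    simp only [mem_inter_iff, mem_Ioi, mem_Ioc]
    exact ⟨fun h => ⟨h.1, h.2.2⟩, fun h => ⟨h.1, hr.1.trans h.1, h.2⟩⟩
  rw [← hslice, ← Measure.restrict_restrict measurableSet_Ioi,
    ← integral_indicator measurableSet_Ioi]
  rfl

theorem integral_kernelAboveDiagonal_right {u : ℝ} (hu : u ∈ Ioc s t) :
    ∫ r, kernelAboveDiagonal K (r, u) ∂μ.restrict (Ioc s t) = ∫ r in Ioo s u, K r u ∂μ := by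
  have hslice : Iio u ∩ Ioc s t = Ioo s u := by
    ext r
    simp only [mem_inter_iff, mem_Iio, mem_Ioc, mem_Ioo]
    exact ⟨fun h => ⟨h.2.1, h.1⟩, fun h => ⟨h.2, h.1, h.2.le.trans hu.2⟩⟩
  rw [← hslice, ← Measure.restrict_restrict measurableSet_Iio,
    ← integral_indicator measurableSet_Iio]
  rfl

variable [IsLocallyFiniteMeasure μ] [IsLocallyFiniteMeasure ν]

theorem integrableOn_setIntegral_Ioc_upper (hK : Continuous fun p : ℝ × ℝ => K p.1 p.2) :
    IntegrableOn (fun r => ∫ u in Ioc r t, K r u ∂ν) (Ioc s t) μ := by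
  refine (integrable_kernelAboveDiagonal (μ := μ) (ν := ν) hK).integral_prod_left.congr ?_
  filter_upwards [ae_restrict_mem measurableSet_Ioc] with r hr
  exact integral_kernelAboveDiagonal_left hr

theorem integrableOn_setIntegral_Ioc_lower [NullSingletonClass μ]
    (hK : Continuous fun p : ℝ × ℝ => K p.1 p.2) :
    IntegrableOn (fun u => ∫ r in Ioc s u, K r u ∂μ) (Ioc s t) ν := by
  refine (integrable_kernelAboveDiagonal (μ := μ) (ν := ν) hK).integral_prod_right.congr ?_
  filter_upwards [ae_restrict_mem measurableSet_Ioc] with u hu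
  rw [integral_kernelAboveDiagonal_right hu, setIntegral_congr_set Ioo_ae_eq_Ioc]

theorem setIntegral_Ioc_setIntegral_Ioc_comm [NullSingletonClass μ]
    (hK : Continuous fun p : ℝ × ℝ => K p.1 p.2) :
    ∫ r in Ioc s t, ∫ u in Ioc r t, K r u ∂ν ∂μ = ∫ u in Ioc s t, ∫ r in Ioc s u, K r u ∂μ ∂ν :=
  calc ∫ r in Ioc s t, ∫ u in Ioc r t, K r u ∂ν ∂μ
      = ∫ r in Ioc s t, ∫ u, kernelAboveDiagonal K (r, u) ∂ν.restrict (Ioc s t) ∂μ :=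
        setIntegral_congr_fun measurableSet_Ioc fun r hr =>
          (integral_kernelAboveDiagonal_left hr).symm
    _ = ∫ u in Ioc s t, ∫ r, kernelAboveDiagonal K (r, u) ∂μ.restrict (Ioc s t) ∂ν :=
        integral_integral_swap (integrable_kernelAboveDiagonal (μ := μ) (ν := ν) hK)
    _ = ∫ u in Ioc s t, ∫ r in Ioc s u, K r u ∂μ ∂ν :=
        setIntegral_congr_fun measurableSet_Ioc fun u hu => by
          rw [integral_kernelAboveDiagonal_right hu, setIntegral_congr_set Ioo_ae_eq_Ioc]

end TriangleFubini

theorem StieltjesFunction.nullSingletonClass_measure {f : StieltjesFunction ℝ}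
    (hf : Continuous f) : NullSingletonClass f.measure :=
  ⟨fun x => by
    rw [f.measure_singleton, hf.continuousWithinAt.leftLim_eq, sub_self, ENNReal.ofReal_zero]⟩

section sInt

variable {A B C D : StieltjesFunction ℝ} {f g : ℝ → ℝ} {s t : ℝ}

theorem sInt_congr (h : EqOn f g (Ioc s t)) : sInt A B f s t = sInt A B g s t := by
  rw [sInt, sInt, setIntegral_congr_fun measurableSet_Ioc h,
    setIntegral_congr_fun measurableSet_Ioc h]

theorem sInt_const (c : ℝ) (hst : s ≤ t) :
    sInt A B (fun _ => c) s t = c * ((A t - B t) - (A s - B s)) := by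
  simp only [sInt, setIntegral_const, smul_eq_mul, measureReal_def, StieltjesFunction.measure_Ioc,
    ENNReal.toReal_ofReal (sub_nonneg.2 (A.mono hst)),
    ENNReal.toReal_ofReal (sub_nonneg.2 (B.mono hst))]
  ring

theorem sInt_add (hf : Continuous f) (hg : Continuous g) :
    sInt A B (fun r => f r + g r) s t = sInt A B f s t + sInt A B g s t := by
  simp only [sInt, integral_add hf.integrableOn_Ioc hg.integrableOn_Ioc]
  ring

theorem sInt_sInt_comm {K : ℝ → ℝ → ℝ} (hA : Continuous A) (hB : Continuous B)
    (hK : Continuous fun p : ℝ × ℝ => K p.1 p.2) :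
    sInt A B (fun r => sInt C D (K r) r t) s t = sInt C D (fun u => sInt A B (K · u) s u) s t := by
  have := A.nullSingletonClass_measure hA
  have := B.nullSingletonClass_measure hB
  simp only [sInt]
  rw [integral_sub (integrableOn_setIntegral_Ioc_upper hK) (integrableOn_setIntegral_Ioc_upper hK),
    integral_sub (integrableOn_setIntegral_Ioc_upper hK) (integrableOn_setIntegral_Ioc_upper hK),
    integral_sub (integrableOn_setIntegral_Ioc_lower hK) (integrableOn_setIntegral_Ioc_lower hK),
    integral_sub (integrableOn_setIntegral_Ioc_lower hK) (integrableOn_setIntegral_Ioc_lower hK),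
    setIntegral_Ioc_setIntegral_Ioc_comm (μ := A.measure) (ν := C.measure) hK,
    setIntegral_Ioc_setIntegral_Ioc_comm (μ := A.measure) (ν := D.measure) hK,
    setIntegral_Ioc_setIntegral_Ioc_comm (μ := B.measure) (ν := C.measure) hK,
    setIntegral_Ioc_setIntegral_Ioc_comm (μ := B.measure) (ν := D.measure) hK]
  ring

theorem sInt_sub_eq_sq_div_two (hA : Continuous A) (hB : Continuous B) (hst : s ≤ t) :
    sInt A B (fun r => (A t - B t) - (A r - B r)) s t = ((A t - B t) - (A s - B s)) ^ 2 / 2 := by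
  have hsymm : sInt A B (fun r => (A t - B t) - (A r - B r)) s t =
      sInt A B (fun r => (A r - B r) - (A s - B s)) s t :=
    calc sInt A B (fun r => (A t - B t) - (A r - B r)) s t
        = sInt A B (fun r => sInt A B (fun _ => 1) r t) s t :=
          sInt_congr fun r hr => by rw [sInt_const 1 hr.2, one_mul]
      _ = sInt A B (fun u => sInt A B (fun _ => 1) s u) s t :=
          sInt_sInt_comm hA hB continuous_const
      _ = sInt A B (fun r => (A r - B r) - (A s - B s)) s t :=
          sInt_congr fun u hu => by rw [sInt_const 1 hu.1.le, one_mul]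
  have hsum : sInt A B (fun r => (A t - B t) - (A r - B r)) s t +
      sInt A B (fun r => (A r - B r) - (A s - B s)) s t =
      ((A t - B t) - (A s - B s)) * ((A t - B t) - (A s - B s)) := by
    rw [← sInt_add (by fun_prop) (by fun_prop), ← sInt_const _ hst]
    exact sInt_congr fun r _ => by ring
  linear_combination hsymm / 2 + hsum / 2

end sInt

section iterInt

variable {d : ℕ} {a b : Fin (d + 1) → StieltjesFunction ℝ} {i : Fin (d + 1)}

theorem iterInt_pair (hai : Continuous (a i)) (hbi : Continuous (b i)) (j : Fin (d + 1))
    (s t : ℝ) :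
    iterInt a b [i, j] s t = sInt (a j) (b j) (fun u => (a i u - b i u) - (a i s - b i s)) s t :=
  calc iterInt a b [i, j] s t
      = sInt (a i) (b i) (fun r => sInt (a j) (b j) (fun _ => 1) r t) s t := rfl
    _ = sInt (a j) (b j) (fun u => sInt (a i) (b i) (fun _ => 1) s u) s t :=
        sInt_sInt_comm hai hbi continuous_const
    _ = sInt (a j) (b j) (fun u => (a i u - b i u) - (a i s - b i s)) s t :=
        sInt_congr fun u hu => by rw [sInt_const 1 hu.1.le, one_mul]

theorem iterInt_triple (hai : Continuous (a i)) (hbi : Continuous (b i)) (j : Fin (d + 1))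
    (s t : ℝ) :
    iterInt a b [i, i, j] s t =
      sInt (a j) (b j) (fun u => ((a i u - b i u) - (a i s - b i s)) ^ 2 / 2) s t :=
  calc iterInt a b [i, i, j] s t
      = sInt (a i) (b i) (fun r => iterInt a b [i, j] r t) s t := rfl
    _ = sInt (a i) (b i)
          (fun r => sInt (a j) (b j) (fun u => (a i u - b i u) - (a i r - b i r)) r t) s t := by
        simp only [iterInt_pair hai hbi]
    _ = sInt (a j) (b j)
          (fun u => sInt (a i) (b i) (fun r => (a i u - b i u) - (a i r - b i r)) s u) s t :=
        sInt_sInt_comm hai hbi (by fun_prop)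
    _ = sInt (a j) (b j) (fun u => ((a i u - b i u) - (a i s - b i s)) ^ 2 / 2) s t :=
        sInt_congr fun u hu => sInt_sub_eq_sq_div_two hai hbi hu.1.le

end iterInt

theorem StieltjesFunction.measure_restrict_Ioc_eq_add {A B g : StieltjesFunction ℝ} {s t : ℝ}
    (hg : ∀ x ∈ Icc s t, g x = A x - B x) :
    A.measure.restrict (Ioc s t) = B.measure.restrict (Ioc s t) + g.measure.restrict (Ioc s t) := by
  refine Measure.ext_of_Ioc _ _ fun u v _ => ?_
  simp only [Measure.coe_add, Pi.add_apply, Measure.restrict_apply measurableSet_Ioc,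
    Ioc_inter_Ioc]
  rcases le_or_gt (max u s) (min v t) with hle | hlt
  · have hx : max u s ∈ Icc s t := ⟨le_max_right _ _, hle.trans (min_le_right _ _)⟩
    have hy : min v t ∈ Icc s t := ⟨(le_max_right _ _).trans hle, min_le_right _ _⟩
    rw [StieltjesFunction.measure_Ioc, StieltjesFunction.measure_Ioc,
      StieltjesFunction.measure_Ioc,
      ← ENNReal.ofReal_add (sub_nonneg.2 (B.mono hle)) (sub_nonneg.2 (g.mono hle)), hg _ hx, hg _ hy]
    congr 1
    ring
  · simp [Ioc_eq_empty_of_le hlt.le]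

theorem exists_stieltjesFunction_sInt_eq {A B : StieltjesFunction ℝ} {s t : ℝ}
    (hA : Continuous A) (hB : Continuous B) (hmono : MonotoneOn (fun r => A r - B r) (Icc s t)) :
    ∃ g : StieltjesFunction ℝ, ∀ f : ℝ → ℝ, Continuous f →
      sInt A B f s t = ∫ r in Ioc s t, f r ∂g.measure := by
  rcases lt_or_ge t s with hts | hst
  · exact ⟨0, fun f _ => by simp [sInt, Ioc_eq_empty_of_le hts.le]⟩
  let g : StieltjesFunction ℝ :=
    { toFun := fun x => A (projIcc s t hst x) - B (projIcc s t hst x)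
      mono' := fun x y hxy => hmono (Subtype.mem _) (Subtype.mem _) (monotone_projIcc hst hxy)
      right_continuous' := fun x =>
        ((hA.sub hB).comp (continuous_subtype_val.comp continuous_projIcc)).continuousWithinAt }
  have hg : ∀ x ∈ Icc s t, g x = A x - B x := fun x hx => by
    change A (projIcc s t hst x) - B (projIcc s t hst x) = _
    rw [projIcc_of_mem hst hx]
  refine ⟨g, fun f hf => ?_⟩
  rw [sInt, StieltjesFunction.measure_restrict_Ioc_eq_add hg,
    integral_add_measure hf.integrableOn_Ioc hf.integrableOn_Ioc]
  ring

theorem integral_eq_zero_of_integral_sq_eq_zero {α : Type*} [MeasurableSpace α] {μ : Measure α}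
    {f : α → ℝ} (hf : Integrable (fun x => f x ^ 2) μ) (h : ∫ x, f x ^ 2 ∂μ = 0) :
    ∫ x, f x ∂μ = 0 := by
  have hzero : f =ᵐ[μ] 0 := by
    filter_upwards [(integral_eq_zero_iff_of_nonneg (fun x => sq_nonneg (f x)) hf).1 h] with x hx
    exact (pow_eq_zero_iff two_ne_zero).1 hx
  exact integral_eq_zero_of_ae hzero

theorem vanishing_iterated_integral_of_strictMono_time_general
    (T : ℝ) (a b : Fin 2 → StieltjesFunction ℝ)
    (ha : ∀ j, Continuous (a j : ℝ → ℝ)) (hb : ∀ j, Continuous (b j : ℝ → ℝ))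
    (w : ℝ → Fin 2 → ℝ) (hw : ∀ j r, w r j = a j r - b j r)
    (hmono : StrictMonoOn (fun r => w r 0) (Set.Icc 0 T))
    (hvanish : iterInt a b [1, 1, 0] 0 T = 0) :
    iterInt a b [1, 0] 0 T = 0 := by
  have hmono₀ : MonotoneOn (fun r => a 0 r - b 0 r) (Icc 0 T) := by
    simpa only [hw] using hmono.monotoneOn
  obtain ⟨g, hg⟩ := exists_stieltjesFunction_sInt_eq (ha 0) (hb 0) hmono₀
  have ha₁ := ha 1
  have hb₁ := hb 1
  have hf : Continuous fun u => (a 1 u - b 1 u) - (a 1 0 - b 1 0) := by fun_prop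
  rw [iterInt_triple ha₁ hb₁, hg _ (by fun_prop), integral_div, div_eq_zero_iff] at hvanish
  rw [iterInt_pair ha₁ hb₁, hg _ hf]
  exact integral_eq_zero_of_integral_sq_eq_zero (hf.pow 2).integrableOn_Ioc
    (hvanish.resolve_right two_ne_zero)

/-- For a continuous bounded-variation path `w = (w⁰, w¹) : [0,T] → ℝ²` starting at the
origin with `w⁰` strictly increasing, the vanishing of
`∫_{0<t₁<t₂<t₃<T} dw¹ dw¹ dw⁰` forces the vanishing of `∫_{0<t₁<t₂<T} dw¹ dw⁰`. -/
theorem vanishing_iterated_integral_of_strictMono_time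
    (T : ℝ) (hT : 0 < T) (a b : Fin 2 → StieltjesFunction ℝ)
    (ha : ∀ j, Continuous (a j : ℝ → ℝ)) (hb : ∀ j, Continuous (b j : ℝ → ℝ))
    (w : ℝ → Fin 2 → ℝ) (hw : ∀ j r, w r j = a j r - b j r)
    (hstart : w 0 = 0)
    (hmono : StrictMonoOn (fun r => w r 0) (Set.Icc 0 T))
    (hvanish : iterInt a b [1, 1, 0] 0 T = 0) :
    iterInt a b [1, 0] 0 T = 0 :=
  vanishing_iterated_integral_of_strictMono_time_general T a b ha hb w hw hmono hvanish
end

section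
/- Let e₀, e₁ be the standard basis of ℝ², and consider Y := exp(e₀ + [e₀,e₁]) in the tensor algebra T((ℝ²)), where [a,b] = a⊗b − b⊗a. Then the coefficient of e₁⊗e₀ in Y equals −1 while the coefficient of e₁⊗e₁⊗e₀ in Y equals 0. -/
/-- Elements of the algebra of formal tensor series `T((ℝ²))` represented by their
coefficients on tensor monomials (words) in the standard basis `e₀, e₁`. -/
abbrev TSeries2 := List (Fin 2) → ℝ

/-- Product in `T((ℝ²))`: `(x ⊗ y)` has, on each word, the sum over splittings of the
word of the products of the coefficients. -/
noncomputable def mulTS (x y : TSeries2) : TSeries2 := fun w =>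
  ∑ k ∈ Finset.range (w.length + 1), x (w.take k) * y (w.drop k)

/-- Tensor powers `a^{⊗n}` in `T((ℝ²))`. -/
noncomputable def powTS (x : TSeries2) : ℕ → TSeries2
  | 0 => fun w => if w = [] then 1 else 0
  | n + 1 => mulTS x (powTS x n)

/-- The exponential `exp(a) = Σ_{k≥0} a^{⊗k}/k!` in `T((ℝ²))`. -/
noncomputable def expTS (x : TSeries2) : TSeries2 := fun w =>
  ∑' n : ℕ, powTS x n w / n.factorial

/-- The Lie polynomial `e₀ + [e₀, e₁] = e₀ + e₀⊗e₁ − e₁⊗e₀` in `T((ℝ²))`. -/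
def lieElt : TSeries2 := fun w =>
  if w = [0] then 1 else if w = [0, 1] then 1 else if w = [1, 0] then -1 else 0

lemma powTS_eq_zero (x : TSeries2) (hx : x [] = 0) :
    ∀ n w, w.length < n → powTS x n w = 0 := by
  intro n
  induction n with
  | zero => intro w h; omega
  | succ n ih =>
    intro w h
    show mulTS x (powTS x n) w = 0
    unfold mulTS
    apply Finset.sum_eq_zero
    intro k hk
    have hk' := Finset.mem_range.mp hk
    rcases Nat.eq_zero_or_pos k with rfl | hkpos
    · simp [hx]
    · have : (w.drop k).length < n := by
        simp only [List.length_drop]; omega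
      rw [ih _ this, mul_zero]

/-- In `Y = exp(e₀ + [e₀,e₁])`, the coefficient of `e₁⊗e₀` is `−1` while the
coefficient of `e₁⊗e₁⊗e₀` is `0`. -/
theorem exp_lie_coefficients :
    expTS lieElt [1, 0] = -1 ∧ expTS lieElt [1, 1, 0] = 0 := by
  have hx : lieElt [] = 0 := by simp [lieElt]
  constructor
  · unfold expTS
    rw [tsum_eq_sum (s := Finset.range 3)]
    · simp [Finset.sum_range_succ, powTS, mulTS, lieElt]
    · intro n hn
      rw [powTS_eq_zero lieElt hx n [1,0] (by simp at hn ⊢; omega), zero_div]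
  · unfold expTS
    rw [tsum_eq_sum (s := Finset.range 4)]
    · simp [Finset.sum_range_succ, powTS, mulTS, lieElt]
    · intro n hn
      rw [powTS_eq_zero lieElt hx n [1,1,0] (by simp at hn ⊢; omega), zero_div]
end
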